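/- arXiv:math/0502254 — 3 statements merged into one kernel-verified Lean document; each statement's English description precedes it below -/
import Mathlib

section
/- For an odd prime $q$ and $b \geq 1$, the number of residues $n$ modulo $q^{2b+2}$ satisfying $n^2 \equiv 4 \pmod{q^{2b}}$ and such that $(n^2-4)q^{-2b}$ is a nonzero quadratic residue modulo $q$ equals $q(q-1)$. -/
open Finset

-- QR count
lemma qr_count (q : ℕ) (hq : q.Prime) (hq2 : q ≠ 2) [Fact q.Prime] :
    2 * ((Finset.univ.filter (fun a : ZMod q => quadraticChar (ZMod q) a = 1)).card) = q - 1 := by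
  have hchar : ringChar (ZMod q) ≠ 2 := by
    rw [ZMod.ringChar_zmod_n]; exact hq2
  have hsum := quadraticChar_sum_zero hchar
  rw [← Finset.sum_filter_add_sum_filter_not Finset.univ
    (fun a : ZMod q => quadraticChar (ZMod q) a = 1)] at hsum
  have h1 : ∑ a ∈ Finset.univ.filter (fun a : ZMod q => quadraticChar (ZMod q) a = 1),
      quadraticChar (ZMod q) a
      = ((Finset.univ.filter (fun a : ZMod q => quadraticChar (ZMod q) a = 1)).card : ℤ) := by
    rw [Finset.sum_congr rfl (fun a ha => (Finset.mem_filter.mp ha).2)]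
    simp
  have h2 : Finset.univ.filter (fun a : ZMod q => ¬ quadraticChar (ZMod q) a = 1)
      = Finset.univ.filter (fun a : ZMod q => quadraticChar (ZMod q) a = -1) ∪ {0} := by
    ext a
    simp only [Finset.mem_filter, Finset.mem_union, Finset.mem_singleton, Finset.mem_univ,
      true_and]
    constructor
    · intro h
      by_cases ha : a = 0
      · exact Or.inr ha
      · rcases quadraticChar_dichotomy ha with h' | h'
        · exact absurd h' h
        · exact Or.inl h'
    · rintro (h | h)
      · rw [h]; decide
      · rw [h, quadraticChar_zero]; decide
  have h0 : (0 : ZMod q) ∉ Finset.univ.filter (fun a : ZMod q => quadraticChar (ZMod q) a = -1) := by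
    simp [quadraticChar_zero]
  rw [h2, Finset.sum_union (by simp [Finset.disjoint_singleton_right, h0]), h1] at hsum
  have h3 : ∑ a ∈ Finset.univ.filter (fun a : ZMod q => quadraticChar (ZMod q) a = -1),
      quadraticChar (ZMod q) a
      = -((Finset.univ.filter (fun a : ZMod q => quadraticChar (ZMod q) a = -1)).card : ℤ) := by
    rw [Finset.sum_congr rfl (fun a ha => (Finset.mem_filter.mp ha).2)]
    simp
  rw [h3] at hsum
  simp only [Finset.sum_singleton, quadraticChar_zero, add_zero] at hsum
  have hcard : (Finset.univ.filter (fun a : ZMod q => quadraticChar (ZMod q) a = 1)).card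
      + ((Finset.univ.filter (fun a : ZMod q => quadraticChar (ZMod q) a = -1)).card + 1) = q := by
    have := Finset.card_filter_add_card_filter_not (s := (Finset.univ : Finset (ZMod q)))
      (p := fun a : ZMod q => quadraticChar (ZMod q) a = 1)
    rw [h2, Finset.card_union_of_disjoint (by simp [Finset.disjoint_singleton_right, h0])] at this
    simpa [ZMod.card] using this
  omega


lemma periodic_count (q : ℕ) (P : ℕ → Prop) [DecidablePred P]
    (hP : ∀ a x, P (q * a + x) ↔ P x) :
    ∀ k, ((Finset.range (q * k)).filter P).card = k * ((Finset.range q).filter P).card := by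
  intro k
  induction k with
  | zero => simp
  | succ k ih =>
    have : q * (k + 1) = q * k + q := by ring
    rw [this, Finset.range_add, Finset.filter_union, Finset.card_union_of_disjoint,
      Finset.filter_map, Finset.card_map, ih]
    · have : ((Finset.range q).filter (P ∘ (addLeftEmbedding (q * k)))).card
          = ((Finset.range q).filter P).card := by
        congr 1
        apply Finset.filter_congr
        intro x _
        simpa using hP k x
      rw [this]; ring
    · apply Finset.disjoint_filter_filter
      rw [Finset.disjoint_left]
      intro x hx hx2
      simp only [Finset.mem_range] at hx
      simp only [Finset.mem_map, addLeftEmbedding_apply] at hx2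
      obtain ⟨y, _, hy⟩ := hx2
      omega


lemma count_range_eq (q : ℕ) [NeZero q] (i : ℕ → ZMod q)
    (hinj : ∀ r s, r < q → s < q → i r = i s → r = s)
    (hsurj : ∀ a : ZMod q, ∃ r, r < q ∧ i r = a)
    (p : ZMod q → Prop) [DecidablePred p] :
    ((Finset.range q).filter (fun r => p (i r))).card
      = (Finset.univ.filter p).card := by
  apply Finset.card_bij (fun r _ => i r)
  · intro r hr
    simp only [Finset.mem_filter, Finset.mem_range] at hr
    simp [hr.2]
  · intro r hr s hs h
    simp only [Finset.mem_filter, Finset.mem_range] at hr hs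
    exact hinj r s hr.1 hs.1 h
  · intro a ha
    simp only [Finset.mem_filter, Finset.mem_univ, true_and] at ha
    obtain ⟨r, hr, hra⟩ := hsurj a
    exact ⟨r, by simp [Finset.mem_filter, hr, hra, ha], hra⟩

example (q : ℕ) [NeZero q] (a : ZMod q) : ((a.val : ℕ) : ZMod q) = a := by
  exact ZMod.natCast_rightInverse a

example (q : ℕ) (hq : q.Prime) [Fact q.Prime] (x : ℤ) :
    legendreSym q x = quadraticChar (ZMod q) (x : ZMod q) := rfl


lemma dvd_split (q : ℕ) (hq : q.Prime) (hq2 : q ≠ 2) (b : ℕ) (n : ℤ)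
    (h : (q : ℤ) ^ (2 * b) ∣ n ^ 2 - 4) :
    (q : ℤ) ^ (2 * b) ∣ n - 2 ∨ (q : ℤ) ^ (2 * b) ∣ n + 2 := by
  have hp : Prime (q : ℤ) := Nat.prime_iff_prime_int.mp hq
  have h' : (q : ℤ) ^ (2 * b) ∣ (n - 2) * (n + 2) := by
    have : n ^ 2 - 4 = (n - 2) * (n + 2) := by ring
    rwa [this] at h
  by_cases hd : (q : ℤ) ∣ n - 2
  · left
    apply hp.pow_dvd_of_dvd_mul_right (2*b) (h' := h')
    intro hd2
    have h4 : (q : ℤ) ∣ 4 := by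
      have : (4 : ℤ) = (n + 2) - (n - 2) := by ring
      rw [this]; exact dvd_sub hd2 hd
    have : (q : ℤ) ∣ 2 := by
      have : (4 : ℤ) = 2 ^ 2 := by norm_num
      rw [this] at h4
      exact hp.dvd_of_dvd_pow h4
    have h2 : (q : ℤ) ≤ 2 := Int.le_of_dvd (by norm_num) this
    have h2' : q ≤ 2 := by exact_mod_cast h2
    have := hq.two_le
    omega
  · right
    exact hp.pow_dvd_of_dvd_mul_left (2*b) hd h'


lemma leg_def (q : ℕ) [Fact q.Prime] (a : ℤ) :
    legendreSym q a = quadraticChar (ZMod q) (a : ZMod q) := rfl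

lemma leg_congr (q : ℕ) [Fact q.Prime] (a b : ℤ) (h : (a : ZMod q) = (b : ZMod q)) :
    legendreSym q a = legendreSym q b := by rw [leg_def, leg_def, h]

lemma myTwoNeZero (q : ℕ) (hq : q.Prime) (hq2 : q ≠ 2) [Fact q.Prime] :
    ((2 : ℤ) : ZMod q) ≠ 0 := by
  intro h
  rw [ZMod.intCast_zmod_eq_zero_iff_dvd] at h
  have : (q : ℤ) ≤ 2 := Int.le_of_dvd (by norm_num) h
  have hq2' : 2 ≤ q := hq.two_le
  have : q ≤ 2 := by exact_mod_cast this
  omega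

lemma legA (q : ℕ) (hq : q.Prime) (hq2 : q ≠ 2) [Fact q.Prime] (b : ℕ) (hb : 1 ≤ b) (t : ℕ) :
    legendreSym q ((((2 + t * q ^ (2 * b) : ℕ) : ℤ) ^ 2 - 4) / (q : ℤ) ^ (2 * b))
      = legendreSym q t := by
  have hq0 : ((q : ℤ)) ^ (2 * b) ≠ 0 :=
    pow_ne_zero _ (by exact_mod_cast hq.ne_zero)
  have key : (((2 + t * q ^ (2 * b) : ℕ) : ℤ) ^ 2 - 4)
      = (q : ℤ) ^ (2 * b) * ((t : ℤ) * (4 + t * (q : ℤ) ^ (2 * b))) := by push_cast; ring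
  rw [key, Int.mul_ediv_cancel_left _ hq0, legendreSym.mul]
  have h4 : legendreSym q (4 + (t : ℤ) * (q : ℤ) ^ (2 * b)) = 1 := by
    have hc : legendreSym q (4 + (t : ℤ) * (q : ℤ) ^ (2 * b)) = legendreSym q 4 := by
      apply leg_congr
      have hq' : ((q : ℤ) : ZMod q) = 0 := by
        rw [show ((q : ℤ) : ZMod q) = ((q : ℕ) : ZMod q) by push_cast; rfl, ZMod.natCast_self]
      push_cast [hq']
      rw [zero_pow (by omega)]
      ring
    rw [hc, show (4 : ℤ) = 2 ^ 2 by norm_num]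
    exact legendreSym.sq_one' (p := q) (myTwoNeZero q hq hq2)
  rw [h4, mul_one]

lemma legB (q : ℕ) (hq : q.Prime) (hq2 : q ≠ 2) [Fact q.Prime] (b : ℕ) (hb : 1 ≤ b) (t : ℕ) :
    legendreSym q (((((t + 1) * q ^ (2 * b) - 2 : ℕ) : ℤ) ^ 2 - 4) / (q : ℤ) ^ (2 * b))
      = legendreSym q (-((t : ℤ) + 1)) := by
  have hq0 : ((q : ℤ)) ^ (2 * b) ≠ 0 :=
    pow_ne_zero _ (by exact_mod_cast hq.ne_zero)
  have hQ2 : 2 ≤ (t + 1) * q ^ (2 * b) := by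
    have h1 : 2 ^ 1 ≤ q ^ (2 * b) :=
      le_trans (Nat.pow_le_pow_right (by norm_num) (by omega)) (Nat.pow_le_pow_left hq.two_le _)
    have h2 := Nat.le_mul_of_pos_left (q ^ (2 * b)) (show 0 < t + 1 by omega)
    omega
  have hcast : (((t + 1) * q ^ (2 * b) - 2 : ℕ) : ℤ)
      = ((t : ℤ) + 1) * (q : ℤ) ^ (2 * b) - 2 := by
    push_cast [hQ2]; ring
  have key : ((((t + 1) * q ^ (2 * b) - 2 : ℕ) : ℤ) ^ 2 - 4)
      = (q : ℤ) ^ (2 * b) * (((t : ℤ) + 1) * (((t : ℤ) + 1) * (q : ℤ) ^ (2 * b) - 4)) := by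
    rw [hcast]; ring
  rw [key, Int.mul_ediv_cancel_left _ hq0, legendreSym.mul]
  have hq' : ((q : ℤ) : ZMod q) = 0 := by
    rw [show ((q : ℤ) : ZMod q) = ((q : ℕ) : ZMod q) by push_cast; rfl, ZMod.natCast_self]
  have hc : legendreSym q (((t : ℤ) + 1) * (q : ℤ) ^ (2 * b) - 4) = legendreSym q (-4) := by
    apply leg_congr
    push_cast [hq']
    rw [zero_pow (by omega)]
    ring
  have h4 : legendreSym q (-4 : ℤ) = legendreSym q (-1) := by
    rw [show (-4 : ℤ) = -1 * 2^2 by norm_num, legendreSym.mul,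
      legendreSym.sq_one' (p := q) (myTwoNeZero q hq hq2), mul_one]
  rw [hc, h4, show (-((t:ℤ)+1)) = -1 * ((t:ℤ)+1) by ring, legendreSym.mul]
  ring

lemma keyA (q b t : ℕ) :
    (((2 + t * q ^ (2 * b) : ℕ) : ℤ) ^ 2 - 4)
      = (q : ℤ) ^ (2 * b) * ((t : ℤ) * (4 + t * (q : ℤ) ^ (2 * b))) := by
  push_cast; ring

lemma keyB (q b t : ℕ) (h2 : 2 ≤ (t + 1) * q ^ (2 * b)) :
    ((((t + 1) * q ^ (2 * b) - 2 : ℕ) : ℤ) ^ 2 - 4)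
      = (q : ℤ) ^ (2 * b) * (((t : ℤ) + 1) * (((t : ℤ) + 1) * (q : ℤ) ^ (2 * b) - 4)) := by
  push_cast [h2]; ring

theorem count_residues_sq_cong_four_legendre_one (q : ℕ) (hq : q.Prime) (hq2 : q ≠ 2)
    [Fact q.Prime] (b : ℕ) (hb : 1 ≤ b) :
    ((Finset.range (q ^ (2 * b + 2))).filter (fun n : ℕ =>
        (q : ℤ) ^ (2 * b) ∣ (n : ℤ) ^ 2 - 4 ∧
        legendreSym q (((n : ℤ) ^ 2 - 4) / (q : ℤ) ^ (2 * b)) = 1)).card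
      = q * (q - 1) := by
  have hq3 : 3 ≤ q := by have := hq.two_le; omega
  have hQ9 : 9 ≤ q ^ (2 * b) := by
    calc (9 : ℕ) = 3 ^ 2 := by norm_num
    _ ≤ q ^ 2 := Nat.pow_le_pow_left hq3 2
    _ ≤ q ^ (2 * b) := Nat.pow_le_pow_right (by omega) (by omega)
  have hQ0 : 0 < q ^ (2 * b) := by omega
  have hQ9' : (9 : ℤ) ≤ (q : ℤ) ^ (2 * b) := by exact_mod_cast hQ9
  have hM : q ^ (2 * b + 2) = q ^ 2 * q ^ (2 * b) := by ring
  set A : Finset ℕ := ((Finset.range (q ^ 2)).filter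
    (fun t : ℕ => legendreSym q (t : ℤ) = 1)).image (fun t => 2 + t * q ^ (2 * b)) with hA
  set B : Finset ℕ := ((Finset.range (q ^ 2)).filter
    (fun t : ℕ => legendreSym q (-((t : ℤ) + 1)) = 1)).image
      (fun t => (t + 1) * q ^ (2 * b) - 2) with hB
  have hBge : ∀ t : ℕ, 2 ≤ (t + 1) * q ^ (2 * b) := fun t => by
    have := Nat.le_mul_of_pos_left (q ^ (2 * b)) (show 0 < t + 1 by omega)
    omega
  have hset : (Finset.range (q ^ (2 * b + 2))).filter (fun n : ℕ =>
        (q : ℤ) ^ (2 * b) ∣ (n : ℤ) ^ 2 - 4 ∧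
        legendreSym q (((n : ℤ) ^ 2 - 4) / (q : ℤ) ^ (2 * b)) = 1) = A ∪ B := by
    ext n
    simp only [Finset.mem_filter, Finset.mem_range, Finset.mem_union, hA, hB,
      Finset.mem_image]
    constructor
    · rintro ⟨hnlt, hdvd, hleg⟩
      have hnlt' : n < q ^ 2 * q ^ (2 * b) := by rwa [hM] at hnlt
      rcases dvd_split q hq hq2 b n hdvd with hd | hd
      · -- n ≡ 2
        have h2n : 2 ≤ n := by
          by_contra h
          push_neg at h
          have hne : (n : ℤ) - 2 ≠ 0 := by omega
          have habs : |(n : ℤ) - 2| < (q : ℤ) ^ (2 * b) :=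
            abs_lt.mpr ⟨by omega, by omega⟩
          exact hne (Int.eq_zero_of_abs_lt_dvd hd habs)
        have hdvdn : q ^ (2 * b) ∣ n - 2 := by
          have : ((q ^ (2 * b) : ℕ) : ℤ) ∣ ((n - 2 : ℕ) : ℤ) := by
            push_cast [h2n]; exact_mod_cast hd
          exact_mod_cast this
        obtain ⟨t, ht⟩ := hdvdn
        have hn : n = 2 + t * q ^ (2 * b) := by
          have : n = q ^ (2 * b) * t + 2 := (Nat.sub_eq_iff_eq_add h2n).mp ht
          rw [this]; ring
        have htlt : t < q ^ 2 := by nlinarith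
        refine Or.inl ⟨t, ⟨htlt, ?_⟩, hn.symm⟩
        rw [hn] at hleg
        rwa [legA q hq hq2 b hb t] at hleg
      · -- n ≡ -2
        have hdvdn : q ^ (2 * b) ∣ n + 2 := by
          have : ((q ^ (2 * b) : ℕ) : ℤ) ∣ ((n + 2 : ℕ) : ℤ) := by
            push_cast; exact_mod_cast hd
          exact_mod_cast this
        obtain ⟨s, hs⟩ := hdvdn
        rcases s with _ | t
        · simp at hs
        · have hn : n = (t + 1) * q ^ (2 * b) - 2 := by
            have : n + 2 = (t + 1) * q ^ (2 * b) := by rw [hs]; ring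
            omega
          have htlt : t < q ^ 2 := by nlinarith [hs, hnlt']
          refine Or.inr ⟨t, ⟨htlt, ?_⟩, hn.symm⟩
          rw [hn] at hleg
          rwa [legB q hq hq2 b hb t] at hleg
    · rintro (⟨t, ⟨htlt, hlegt⟩, hn⟩ | ⟨t, ⟨htlt, hlegt⟩, hn⟩)
      · subst hn
        refine ⟨?_, ⟨_, keyA q b t⟩, ?_⟩
        · rw [hM]
          have h1 : (t + 1) * q ^ (2 * b) ≤ q ^ 2 * q ^ (2 * b) :=
            Nat.mul_le_mul_right _ (by omega)
          nlinarith
        · rw [legA q hq hq2 b hb t]; exact hlegt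
      · subst hn
        refine ⟨?_, ⟨_, keyB q b t (hBge t)⟩, ?_⟩
        · rw [hM]
          have h1 : (t + 1) * q ^ (2 * b) ≤ q ^ 2 * q ^ (2 * b) :=
            Nat.mul_le_mul_right _ (by omega)
          have h2 := hBge t
          omega
        · rw [legB q hq hq2 b hb t]; exact hlegt
  rw [hset]
  have hdisj : Disjoint A B := by
    rw [Finset.disjoint_left]
    rintro n hnA hnB
    rw [hA, Finset.mem_image] at hnA
    rw [hB, Finset.mem_image] at hnB
    obtain ⟨t, _, ht⟩ := hnA
    obtain ⟨s, _, hs⟩ := hnB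
    have h2 := hBge s
    have heq : (s + 1) * q ^ (2 * b) = t * q ^ (2 * b) + 4 := by omega
    have hdvd4 : q ^ (2 * b) ∣ 4 := by
      have d1 : q ^ (2 * b) ∣ (s + 1) * q ^ (2 * b) := dvd_mul_left _ _
      have d2 : q ^ (2 * b) ∣ t * q ^ (2 * b) := dvd_mul_left _ _
      have : (s + 1) * q ^ (2 * b) - t * q ^ (2 * b) = 4 := by omega
      rw [← this]
      exact Nat.dvd_sub d1 d2
    have := Nat.le_of_dvd (by norm_num) hdvd4
    omega
  rw [Finset.card_union_of_disjoint hdisj]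
  have hcardA : A.card = ((Finset.range (q ^ 2)).filter
      (fun t : ℕ => legendreSym q (t : ℤ) = 1)).card := by
    apply Finset.card_image_of_injective
    intro a c h
    simp only at h
    have : a * q ^ (2 * b) = c * q ^ (2 * b) := by omega
    exact Nat.eq_of_mul_eq_mul_right hQ0 this
  have hcardB : B.card = ((Finset.range (q ^ 2)).filter
      (fun t : ℕ => legendreSym q (-((t : ℤ) + 1)) = 1)).card := by
    apply Finset.card_image_of_injective
    intro a c h
    simp only at h
    have h1 := hBge a
    have h2 := hBge c
    have : (a + 1) * q ^ (2 * b) = (c + 1) * q ^ (2 * b) := by omega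
    have := Nat.eq_of_mul_eq_mul_right hQ0 this
    omega
  rw [hcardA, hcardB]
  have hper1 : ∀ a x : ℕ, (legendreSym q ((q * a + x : ℕ) : ℤ) = 1)
      ↔ (legendreSym q (x : ℤ) = 1) := by
    intro a x
    rw [leg_congr q ((q * a + x : ℕ) : ℤ) (x : ℤ)
      (by push_cast [ZMod.natCast_self]; ring)]
  have hper2 : ∀ a x : ℕ, (legendreSym q (-(((q * a + x : ℕ) : ℤ) + 1)) = 1)
      ↔ (legendreSym q (-((x : ℤ) + 1)) = 1) := by
    intro a x
    rw [leg_congr q (-(((q * a + x : ℕ) : ℤ) + 1)) (-((x : ℤ) + 1))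
      (by push_cast [ZMod.natCast_self]; ring)]
  rw [show q ^ 2 = q * q from pow_two q]
  rw [periodic_count q (fun t : ℕ => legendreSym q (t : ℤ) = 1) hper1 q]
  rw [periodic_count q (fun t : ℕ => legendreSym q (-((t : ℤ) + 1)) = 1) hper2 q]
  have hval : ∀ r : ℕ, r < q → ∀ s : ℕ, s < q → ((r : ZMod q) = (s : ZMod q)) → r = s := by
    intro r hr s hs h
    have := congrArg ZMod.val h
    rwa [ZMod.val_cast_of_lt hr, ZMod.val_cast_of_lt hs] at this
  have hc1 : ((Finset.range q).filter (fun t : ℕ => legendreSym q (t : ℤ) = 1)).card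
      = (Finset.univ.filter (fun a : ZMod q => quadraticChar (ZMod q) a = 1)).card := by
    simp only [leg_def]
    refine count_range_eq q (fun r : ℕ => (((r : ℤ)) : ZMod q)) ?_ ?_
      (fun a => quadraticChar (ZMod q) a = 1)
    · intro r s hr hs h
      apply hval r hr s hs
      exact_mod_cast h
    · intro a
      refine ⟨a.val, ZMod.val_lt a, ?_⟩
      show (((a.val : ℕ) : ℤ) : ZMod q) = a
      push_cast
      exact ZMod.natCast_rightInverse a
  have hc2 : ((Finset.range q).filter
      (fun t : ℕ => legendreSym q (-((t : ℤ) + 1)) = 1)).card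
      = (Finset.univ.filter (fun a : ZMod q => quadraticChar (ZMod q) a = 1)).card := by
    simp only [leg_def]
    refine count_range_eq q (fun r : ℕ => ((Int.cast (-((r : ℤ) + 1))) : ZMod q)) ?_ ?_
      (fun a => quadraticChar (ZMod q) a = 1)
    · intro r s hr hs h
      apply hval r hr s hs
      push_cast at h
      have h' := neg_inj.mp h
      exact add_right_cancel h'
    · intro a
      refine ⟨(-(a + 1) : ZMod q).val, ZMod.val_lt _, ?_⟩
      push_cast
      rw [ZMod.natCast_rightInverse]
      ring
  rw [hc1, hc2]
  have h2K := qr_count q hq hq2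
  set K := (Finset.univ.filter (fun a : ZMod q => quadraticChar (ZMod q) a = 1)).card
  have hq1 : 1 ≤ q := hq.one_lt.le
  calc q * K + q * K = q * (2 * K) := by ring
  _ = q * (q - 1) := by rw [h2K]
end

section
/- Let $Q$ be an odd squarefree positive integer and $t \in \mathbb{Z}$ with $\sqrt{t^2-4} \notin \mathbb{Q}$. Write $t^2 - 4 = l^2 d$ with $l \geq 1$ and $d$ a fundamental discriminant. Then there exists a matrix in $\Gamma_0(Q)$ of trace $t$ if and only if for every prime $q \mid Q$, either $q \mid l$ or $\left(\frac{d}{q}\right) \neq -1$. -/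
/-- A nonzero integer `d` is a fundamental discriminant. -/
def IsFundamentalDiscriminant (d : ℤ) : Prop :=
  d ≠ 0 ∧
    ((d % 4 = 1 ∧ Squarefree d ∧ d ≠ 1) ∨
      (d % 4 = 0 ∧ Squarefree (d / 4) ∧ ¬ (d / 4) % 4 = 1))

open CongruenceSubgroup Matrix

lemma isSquare_zmod_of_forall_prime (m : ℤ) : ∀ n : ℕ, Squarefree n →
    (∀ q : ℕ, q.Prime → q ∣ n → IsSquare ((m : ZMod q))) → IsSquare ((m : ZMod n)) := by
  intro n
  induction n using Nat.strong_induction_on with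
  | _ n ih =>
    intro hsf h
    rcases eq_or_ne n 1 with rfl | hn1
    · exact ⟨0, Subsingleton.elim _ _⟩
    · obtain ⟨q, hq, k, rfl⟩ := Nat.exists_prime_and_dvd hn1
      obtain ⟨hcop, hsq, hsk⟩ := Nat.squarefree_mul_iff.mp hsf
      have hk0 : k ≠ 0 := by rintro rfl; exact hsf.ne_zero (by ring)
      have hklt : k < q * k := lt_mul_left (Nat.pos_of_ne_zero hk0) hq.one_lt
      have h1 : IsSquare ((m : ZMod q)) := h q hq ⟨k, rfl⟩
      have h2 : IsSquare ((m : ZMod k)) :=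
        ih k hklt hsk (fun p hp hpk => h p hp (hpk.mul_left q))
      obtain ⟨r1, hr1⟩ := h1
      obtain ⟨r2, hr2⟩ := h2
      have e := ZMod.chineseRemainder hcop
      have : IsSquare ((m : ZMod q × ZMod k)) := ⟨(r1, r2), by
        simp [Prod.ext_iff, hr1, hr2]⟩
      have := this.map (e.symm : ZMod q × ZMod k →+* ZMod (q * k))
      simpa using this

theorem exists_trace_t_in_Gamma0_iff (Q : ℕ) (hQpos : 0 < Q) (hQodd : Odd Q)
    (hQsf : Squarefree Q) (t : ℤ) (hirr : ¬ IsSquare (t ^ 2 - 4))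
    (l : ℤ) (hl : 1 ≤ l) (d : ℤ) (hd : IsFundamentalDiscriminant d)
    (hfac : t ^ 2 - 4 = l ^ 2 * d) :
    (∃ A : Gamma0 Q,
        Matrix.trace ((A : Matrix.SpecialLinearGroup (Fin 2) ℤ) : Matrix (Fin 2) (Fin 2) ℤ) = t)
      ↔ ∀ q : ℕ, q.Prime → q ∣ Q → ((q : ℤ) ∣ l ∨ IsSquare (d : ZMod q)) := by
  constructor
  · rintro ⟨⟨A, hA⟩, htr⟩ q hq hqQ
    haveI : Fact q.Prime := ⟨hq⟩
    have hdet := A.property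
    rw [Matrix.det_fin_two] at hdet
    rw [Matrix.trace_fin_two] at htr
    have hc : ((A : Matrix (Fin 2) (Fin 2) ℤ) 1 0 : ZMod Q) = 0 := Gamma0_mem.mp hA
    have hcd : (q : ℤ) ∣ (A : Matrix (Fin 2) (Fin 2) ℤ) 1 0 :=
      dvd_trans (Int.natCast_dvd_natCast.mpr hqQ)
        ((ZMod.intCast_zmod_eq_zero_iff_dvd _ Q).mp hc)
    -- work mod q
    by_cases hql : (q : ℤ) ∣ l
    · exact Or.inl hql
    right
    have hc0 : (((A : Matrix (Fin 2) (Fin 2) ℤ) 1 0 : ℤ) : ZMod q) = 0 :=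
      (ZMod.intCast_zmod_eq_zero_iff_dvd _ q).mpr hcd
    set a : ZMod q := (((A : Matrix (Fin 2) (Fin 2) ℤ) 0 0 : ℤ) : ZMod q)
    set b : ZMod q := (((A : Matrix (Fin 2) (Fin 2) ℤ) 0 1 : ℤ) : ZMod q)
    set e : ZMod q := (((A : Matrix (Fin 2) (Fin 2) ℤ) 1 1 : ℤ) : ZMod q)
    have hdet' : a * e = 1 := by
      have := congrArg (fun z : ℤ => (z : ZMod q)) hdet
      push_cast at this
      rw [hc0] at this
      simpa using this
    have htr' : a + e = (t : ZMod q) := by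
      have := congrArg (fun z : ℤ => (z : ZMod q)) htr
      push_cast at this
      exact this
    have hln : (l : ZMod q) ≠ 0 := fun h0 =>
      hql ((ZMod.intCast_zmod_eq_zero_iff_dvd _ q).mp h0)
    have hfac' : ((t : ZMod q)) ^ 2 - 4 = (l : ZMod q) ^ 2 * (d : ZMod q) := by
      have := congrArg (fun z : ℤ => (z : ZMod q)) hfac
      push_cast at this
      exact this
    refine ⟨(a - e) * (l : ZMod q)⁻¹, ?_⟩
    have hinv : (l : ZMod q) * (l : ZMod q)⁻¹ = 1 := ZMod.mul_inv_of_unit _ (hln.isUnit)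
    have hx2 : (a - e) * (a - e) = (l : ZMod q) ^ 2 * (d : ZMod q) := by
      rw [← hfac', ← htr']
      linear_combination (-4 : ZMod q) * hdet'
    linear_combination (-((l:ZMod q)⁻¹)^2) * hx2 -
      ((d : ZMod q) * ((l:ZMod q) * (l:ZMod q)⁻¹ + 1)) * hinv
  · intro h
    haveI : NeZero Q := ⟨hQpos.ne'⟩
    have hsq : IsSquare ((t ^ 2 - 4 : ℤ) : ZMod Q) := by
      refine isSquare_zmod_of_forall_prime _ Q hQsf (fun q hq hqQ => ?_)
      haveI : Fact q.Prime := ⟨hq⟩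
      rcases h q hq hqQ with hql | ⟨r, hr⟩
      · have : (l : ZMod q) = 0 := (ZMod.intCast_zmod_eq_zero_iff_dvd _ q).mpr hql
        refine ⟨0, ?_⟩
        push_cast [hfac]
        rw [this]; ring
      · refine ⟨(l : ZMod q) * r, ?_⟩
        push_cast [hfac]
        rw [hr]; ring
    obtain ⟨x, hx⟩ := hsq
    have hx' : ((t : ZMod Q)) ^ 2 - 4 = x * x := by
      have := hx
      push_cast at this
      exact this
    -- 2 is a unit mod Q
    have h2 : IsUnit (2 : ZMod Q) := by
      have : IsUnit ((2 : ℕ) : ZMod Q) := by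
        rw [ZMod.isUnit_iff_coprime]
        exact (Nat.prime_two.coprime_iff_not_dvd).mpr
          (fun hdvd => by have := Nat.odd_iff.mp hQodd; omega)
      simpa using this
    obtain ⟨u, hu⟩ := h2
    set v : ZMod Q := ((u⁻¹ : (ZMod Q)ˣ) : ZMod Q) with hv
    have hv2 : (2 : ZMod Q) * v = 1 := by
      rw [← hu, hv]
      exact_mod_cast u.mul_inv
    set α : ZMod Q := ((t : ZMod Q) + x) * v with hα
    have key2 : α * ((t : ZMod Q) - α) = 1 := by
      rw [hα]
      linear_combination ((2*v+1) - ((t:ZMod Q)+x)*v*(t:ZMod Q)) * hv2 + v^2 * hx'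
    set a : ℤ := (α.val : ℤ) with ha
    have hcast : (a : ZMod Q) = α := by
      rw [ha]
      push_cast
      rw [ZMod.natCast_val, ZMod.cast_id]
    set c : ℤ := a * (t - a) - 1 with hcdef
    have hdet : (!![a, 1; c, t - a] : Matrix (Fin 2) (Fin 2) ℤ).det = 1 := by
      rw [Matrix.det_fin_two_of, hcdef]; ring
    set M : Matrix.SpecialLinearGroup (Fin 2) ℤ := ⟨!![a, 1; c, t - a], hdet⟩ with hM
    have hmem : M ∈ Gamma0 Q := by
      rw [Gamma0_mem]
      show ((c : ℤ) : ZMod Q) = 0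
      rw [hcdef]
      push_cast
      rw [hcast]
      linear_combination key2
    refine ⟨⟨M, hmem⟩, ?_⟩
    rw [Matrix.trace_fin_two]
    show a + (t - a) = t
    ring
end

section
/- For an odd prime $q$, $\frac{1}{q^2}\sum_{n \bmod q^2} \left(1 - \frac{1}{q}\left(\frac{n^2-4}{q}\right)\right)^{-1} \cdot w(n) = 1 - \frac{2}{q^2(q-1)}$, where $w(n) = 2$ if $q^2 \mid n^2-4$ and $w(n) = 1 + \left(\frac{n^2-4}{q}\right)$ otherwise. -/
/-!
The weight equals `1 + (n² - 4 / q)` plus an extra `1` at the two residues `n ≡ ±2 mod q²`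
(where the Legendre symbol vanishes). The first part is `q`-periodic in `n`. On the values
`c ∈ {0, ±1}` of the Legendre symbol, `(1 - c/q)⁻¹ (1 + c)` agrees with a quadratic polynomial
in `c`, so its sum over residues mod `q` reduces to `∑ χ(a² - 4) = -1`, a Jacobi sum, and
`∑ χ(a² - 4)² = q - 2`.
-/

open Finset

section QuadraticChar

variable {F : Type*} [Field F] [Fintype F] [DecidableEq F]

/-- After the substitution `a = r + (s - r) x` the sum becomes `χ(-1) J(χ, χ)`,
and `χ = χ⁻¹`. -/
theorem quadraticChar_sum_mul_sub_sub (hF : ringChar F ≠ 2) {r s : F} (hrs : r ≠ s) :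
    ∑ a, quadraticChar F ((a - r) * (a - s)) = -1 := by
  set χ := quadraticChar F
  have hd : s - r ≠ 0 := sub_ne_zero.mpr hrs.symm
  have hsubst (x : F) : χ ((r + (s - r) * x - r) * (r + (s - r) * x - s)) =
      χ (-1) * (χ x * χ⁻¹ (1 - x)) := by
    rw [(quadraticChar_isQuadratic F).inv, ← map_mul, ← map_mul, ← one_mul (χ (-1 * _)),
      ← quadraticChar_sq_one' hd, ← map_mul]
    congr 1
    ring
  calc ∑ a, χ ((a - r) * (a - s))
      = ∑ x, χ ((r + (s - r) * x - r) * (r + (s - r) * x - s)) :=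
        (((Equiv.mulLeft₀ _ hd).trans (Equiv.addLeft r)).sum_comp _).symm
    _ = χ (-1) * jacobiSum χ χ⁻¹ := by simp only [hsubst, ← mul_sum, jacobiSum]
    _ = -1 := by
      rw [jacobiSum_nontrivial_inv (quadraticChar_ne_one hF), mul_neg, ← sq,
        quadraticChar_sq_one (neg_ne_zero.mpr one_ne_zero)]

theorem quadraticChar_sq_sum_mul_sub_sub {r s : F} (hrs : r ≠ s) :
    ∑ a, quadraticChar F ((a - r) * (a - s)) ^ 2 = (Fintype.card F : ℤ) - 2 := by
  have hterm (a : F) : quadraticChar F ((a - r) * (a - s)) ^ 2 =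
      1 - if a ∈ ({r, s} : Finset F) then 1 else 0 := by
    split_ifs with h
    · rcases (by simpa using h : a = r ∨ a = s) with rfl | rfl <;> simp
    · rw [sub_zero, quadraticChar_sq_one]
      rw [mem_insert, mem_singleton, not_or] at h
      exact mul_ne_zero (sub_ne_zero.mpr h.1) (sub_ne_zero.mpr h.2)
  simp only [hterm, sum_sub_distrib, sum_ite_mem, univ_inter, sum_const, card_pair hrs,
    card_univ, nsmul_eq_mul, mul_one, Nat.cast_ofNat]

theorem inv_one_sub_div_mul_mul_one_add {K : Type*} [Field K] {x c : K} (hx0 : x ≠ 0)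
    (hx1 : x - 1 ≠ 0) (hc : c = 0 ∨ c = 1 ∨ c = -1) :
    (1 - 1 / x * c)⁻¹ * (1 + c) = 1 + x / (x - 1) * c + 1 / (x - 1) * c ^ 2 := by
  rcases hc with rfl | rfl | rfl
  · simp
  · rw [show 1 - 1 / x * 1 = (x - 1) / x by field_simp]
    field_simp
    ring
  · field_simp
    ring

theorem sum_inv_one_sub_div_mul_mul_one_add_quadraticChar (hF : ringChar F ≠ 2) {b : F}
    (hb : b ≠ 0) :
    ∑ a, (1 - 1 / (Fintype.card F : ℝ) * quadraticChar F (a ^ 2 - b ^ 2))⁻¹ *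
        (1 + quadraticChar F (a ^ 2 - b ^ 2)) =
      (Fintype.card F : ℝ) - 2 / (Fintype.card F - 1) := by
  have hq0 : (Fintype.card F : ℝ) ≠ 0 := by simp
  have hq1 : (Fintype.card F : ℝ) - 1 ≠ 0 :=
    sub_ne_zero.mpr (by simpa using Fintype.one_lt_card.ne')
  have hbb : b ≠ -b := fun h => hb ((Ring.eq_self_iff_eq_zero_of_char_ne_two hF).mp h.symm)
  have hfac (a : F) : a ^ 2 - b ^ 2 = (a - b) * (a - -b) := by ring
  have hχ (a : F) : ((quadraticChar F (a ^ 2 - b ^ 2) : ℤ) : ℝ) = 0 ∨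
      ((quadraticChar F (a ^ 2 - b ^ 2) : ℤ) : ℝ) = 1 ∨
      ((quadraticChar F (a ^ 2 - b ^ 2) : ℤ) : ℝ) = -1 := by
    rcases quadraticChar_isQuadratic F (a ^ 2 - b ^ 2) with h | h | h <;> simp [h]
  have hsum : ∑ a, ((quadraticChar F (a ^ 2 - b ^ 2) : ℤ) : ℝ) = -1 := by
    simp only [hfac]
    exact_mod_cast quadraticChar_sum_mul_sub_sub hF hbb
  have hsum_sq :
      ∑ a, ((quadraticChar F (a ^ 2 - b ^ 2) : ℤ) : ℝ) ^ 2 = Fintype.card F - 2 := by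
    simp only [hfac]
    exact_mod_cast quadraticChar_sq_sum_mul_sub_sub hbb
  simp only [inv_one_sub_div_mul_mul_one_add hq0 hq1 (hχ _), sum_add_distrib, ← mul_sum,
    hsum, hsum_sq, sum_const, card_univ, nsmul_eq_mul, mul_one]
  field_simp
  ring

end QuadraticChar

theorem sum_range_eq_sum_zmod {M : Type*} [AddCommMonoid M] (m : ℕ) [NeZero m]
    (f : ZMod m → M) : ∑ n ∈ range m, f n = ∑ a, f a :=
  sum_nbij' (↑) ZMod.val (fun _ _ => mem_univ _) (fun a _ => mem_range.mpr a.val_lt)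
    (fun _ hn => ZMod.val_natCast_of_lt (mem_range.mp hn)) (fun a _ => ZMod.natCast_zmod_val a)
    (fun _ _ => rfl)

theorem sum_range_mul_eq_nsmul_sum_zmod {M : Type*} [AddCommMonoid M] (m : ℕ) [NeZero m]
    (f : ZMod m → M) (k : ℕ) : ∑ n ∈ range (k * m), f n = k • ∑ a, f a := by
  induction k with
  | zero => simp
  | succ k ih =>
    simp only [Nat.succ_mul, sum_range_add, ih, ← sum_range_eq_sum_zmod, succ_nsmul,
      Nat.cast_add, Nat.cast_mul, ZMod.natCast_self, mul_zero, zero_add]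

theorem Prime.pow_dvd_sq_sub_sq_iff {R : Type*} [CommRing R] [IsDomain R] {p a b : R}
    (hp : Prime p) (hb : ¬p ∣ 2 * b) (k : ℕ) :
    p ^ k ∣ a ^ 2 - b ^ 2 ↔ p ^ k ∣ a - b ∨ p ^ k ∣ a + b := by
  have hfac : a ^ 2 - b ^ 2 = (a - b) * (a + b) := by ring
  rw [hfac]
  refine ⟨fun h => ?_, fun h => h.elim (dvd_mul_of_dvd_left · _) (dvd_mul_of_dvd_right · _)⟩
  by_cases hab : p ∣ a - b
  · have hab' : ¬p ∣ a + b := fun h' => hb <| by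
      simpa only [show a + b - (a - b) = 2 * b by ring] using dvd_sub h' hab
    exact .inl (hp.pow_dvd_of_dvd_mul_right k hab' h)
  · exact .inr (hp.pow_dvd_of_dvd_mul_left k hab h)

theorem card_filter_range_pow_dvd_sq_sub_four {p k : ℕ} (hp : p.Prime) (hp2 : p ≠ 2)
    (hk : k ≠ 0) : #{n ∈ range (p ^ k) | (p : ℤ) ^ k ∣ ((n : ℕ) : ℤ) ^ 2 - 4} = 2 := by
  have hp3 : 3 ≤ p ^ k := (Nat.le_self_pow hk p).trans' (by have := hp.two_le; omega)
  have hodd : p ^ k % 2 = 1 := Nat.odd_iff.mp ((hp.odd_of_ne_two hp2).pow)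
  have hp4 : ¬(p : ℤ) ∣ 2 * 2 := by
    intro h
    have h2 := (Nat.prime_iff_prime_int.mp hp).dvd_or_dvd h
    simp only [or_self] at h2
    exact hp2 ((Nat.prime_dvd_prime_iff_eq hp Nat.prime_two).mp (by exact_mod_cast h2))
  suffices {n ∈ range (p ^ k) | (p : ℤ) ^ k ∣ ((n : ℕ) : ℤ) ^ 2 - 4} = {2, p ^ k - 2} by
    rw [this, card_pair (by omega)]
  ext n
  rw [mem_filter, mem_range, mem_insert, mem_singleton, show (4 : ℤ) = 2 ^ 2 by norm_num,
    (Nat.prime_iff_prime_int.mp hp).pow_dvd_sq_sub_sq_iff hp4, ← Nat.cast_pow]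
  generalize p ^ k = M at *
  constructor
  · rintro ⟨hn, h | h⟩
    · left
      have := Int.eq_zero_of_abs_lt_dvd h (abs_sub_lt_iff.mpr ⟨by omega, by omega⟩)
      omega
    · right
      have := Int.eq_zero_of_abs_lt_dvd (dvd_sub h dvd_rfl)
        (abs_sub_lt_iff.mpr ⟨by omega, by omega⟩)
      omega
  · rintro (rfl | rfl)
    · exact ⟨by omega, .inl (by simp)⟩
    · exact ⟨by omega, .inr ⟨1, by omega⟩⟩

theorem inv_one_sub_div_mul_legendreSym_mul_ite (p : ℕ) [Fact p.Prime] (a : ℤ) :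
    (1 - 1 / (p : ℝ) * legendreSym p a)⁻¹ *
        (if (p : ℤ) ^ 2 ∣ a then 2 else 1 + (legendreSym p a : ℝ)) =
      (1 - 1 / (p : ℝ) * legendreSym p a)⁻¹ * (1 + legendreSym p a) +
        if (p : ℤ) ^ 2 ∣ a then 1 else 0 := by
  split_ifs with h
  · have hp : (a : ZMod p) = 0 :=
      (ZMod.intCast_zmod_eq_zero_iff_dvd a p).mpr ((dvd_pow_self _ two_ne_zero).trans h)
    rw [(legendreSym.eq_zero_iff p a).mpr hp]
    norm_num
  · rw [add_zero]

theorem fourier_coeff_zero_b_zero_general (q : ℕ) (hq2 : q ≠ 2) [Fact q.Prime] :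
    (1 / (q : ℝ) ^ 2) * ∑ n ∈ Finset.range (q ^ 2),
        (1 - (1 / (q : ℝ)) * (legendreSym q ((n : ℤ) ^ 2 - 4) : ℝ))⁻¹ *
          (if (q : ℤ) ^ 2 ∣ (n : ℤ) ^ 2 - 4 then 2
            else 1 + (legendreSym q ((n : ℤ) ^ 2 - 4) : ℝ))
      = 1 - 2 / ((q : ℝ) ^ 2 * ((q : ℝ) - 1)) := by
  have hq : q.Prime := Fact.out
  have hchar : ringChar (ZMod q) ≠ 2 := by rwa [ZMod.ringChar_zmod_n]
  have hlegendre (n : ℕ) :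
      legendreSym q ((n : ℤ) ^ 2 - 4) = quadraticChar (ZMod q) ((n : ZMod q) ^ 2 - 2 ^ 2) := by
    simp only [legendreSym, Int.cast_sub, Int.cast_pow, Int.cast_natCast]
    norm_num
  have hresidues := sum_inv_one_sub_div_mul_mul_one_add_quadraticChar hchar
    (Ring.two_ne_zero hchar)
  rw [ZMod.card] at hresidues
  rw [sum_congr rfl fun n _ => inv_one_sub_div_mul_legendreSym_mul_ite q _, sum_add_distrib]
  simp only [hlegendre]
  rw [sq q, sum_range_mul_eq_nsmul_sum_zmod q
    (fun a => (1 - 1 / (q : ℝ) * quadraticChar (ZMod q) (a ^ 2 - 2 ^ 2))⁻¹ *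
      (1 + quadraticChar (ZMod q) (a ^ 2 - 2 ^ 2))), hresidues, sum_boole, ← sq,
    card_filter_range_pow_dvd_sq_sub_four hq hq2 two_ne_zero, nsmul_eq_mul, Nat.cast_ofNat]
  have hq0 : (q : ℝ) ≠ 0 := by exact_mod_cast hq.ne_zero
  have hq1 : (q : ℝ) - 1 ≠ 0 := sub_ne_zero.mpr (by exact_mod_cast hq.one_lt.ne')
  field_simp
  ring

theorem fourier_coeff_zero_b_zero (q : ℕ) (hq : q.Prime) (hq2 : q ≠ 2) [Fact q.Prime] :
    (1 / (q : ℝ) ^ 2) * ∑ n ∈ Finset.range (q ^ 2),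
        (1 - (1 / (q : ℝ)) * (legendreSym q ((n : ℤ) ^ 2 - 4) : ℝ))⁻¹ *
          (if (q : ℤ) ^ 2 ∣ (n : ℤ) ^ 2 - 4 then 2
            else 1 + (legendreSym q ((n : ℤ) ^ 2 - 4) : ℝ))
      = 1 - 2 / ((q : ℝ) ^ 2 * ((q : ℝ) - 1)) :=
  fourier_coeff_zero_b_zero_general q hq2
end
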